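/- arXiv:2507.04916 — 4 statements merged into one kernel-verified Lean document; each statement's English description precedes it below -/
import Mathlib

section
/- Two binary words w₁, w₂ ∈ {0,1}ⁿ of the same length n are cyclically equalizable if and only if the Hamming weights of w₁ and w₂ are equal, i.e., wt(w₁) = wt(w₂). -/
/-- Two words of the same length are *cyclically equal* if one is obtained from the
other by a cyclic shift of positions: there is an integer `δ` such that the `j`-th
letter of `w₂` equals the `((j + δ) mod n)`-th letter of `w₁`. -/
def CyclicallyEqual {α : Type*} (w₁ w₂ : List α) : Prop :=
  w₁.length = w₂.length ∧
    ∃ δ : ℤ, ∀ j : ℕ, j < w₂.length →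
      w₂[j]? = w₁[(((j : ℤ) + δ) % (w₁.length : ℤ)).toNat]?

/-- `riffle w us = u₀ a₀ u₁ a₁ ⋯ u_{n-1} a_{n-1} u_n ⋯`, interleaving the words of
`us` with the letters of `w` (starting with `us.head`), and appending the remaining
words of `us` at the end. -/
def riffle {α : Type*} : List α → List (List α) → List α
  | [], us => us.flatten
  | a :: w, us => us.headD [] ++ a :: riffle w us.tail

/-- `InsertsTo Δ w w'` says that the family of words `w'` is obtained from the family
`w` by a simultaneous `Δ`-insertion: there are words `u₀, …, u_n` over `Δ` (where `n`
is the common length of the `w i`) such that each `w' i` is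
`u₀ a_{i,0} u₁ a_{i,1} ⋯ u_{n-1} a_{i,n-1} u_n` where `w i = a_{i,0} ⋯ a_{i,n-1}`. -/
def InsertsTo {α : Type*} (Δ : Set α) {k : ℕ} (w w' : Fin k → List α) : Prop :=
  ∃ us : List (List α),
    (∀ u ∈ us, ∀ c ∈ u, c ∈ Δ) ∧
    (∀ i, us.length = (w i).length + 1) ∧
    (∀ i, w' i = riffle (w i) us)

/-- A family of words is `Δ`-cyclically equalizable if some `Δ`-insertion transforms
them into pairwise cyclically equal words. -/
def CyclicallyEqualizable {α : Type*} (Δ : Set α) {k : ℕ} (w : Fin k → List α) : Prop :=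
  ∃ w' : Fin k → List α, InsertsTo Δ w w' ∧ ∀ i j, CyclicallyEqual (w' i) (w' j)


open List
theorem count_riffle {α : Type*} [DecidableEq α] (c : α) : ∀ (w : List α) (us : List (List α)),
    (riffle w us).count c = w.count c + us.flatten.count c
  | [], us => by simp [riffle]
  | a :: w, us => by
    have h : us.flatten.count c = (us.headD []).count c + us.tail.flatten.count c := by
      cases us <;> simp
    rw [riffle, List.count_append]
    simp only [List.count_cons, count_riffle c w us.tail, h]
    omega

theorem countP_split {α : Type*} (p q : α → Bool) : ∀ (l : List α),
    l.countP p = l.countP (fun x => p x && q x) + l.countP (fun x => p x && !q x)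
  | [] => by simp
  | a :: l => by
    rw [countP_cons, countP_cons, countP_cons, countP_split p q l]
    cases hp : p a <;> cases hq : q a <;> simp <;> omega

theorem count_true_eq (w : List Bool) :
    w.count true = (range w.length).countP (fun j => w.getD j false) := by
  induction w with
  | nil => simp
  | cons a w ih =>
    rw [length_cons, range_succ_eq_map, List.count_cons, countP_cons, countP_map, ih]
    simp only [Function.comp_def, Nat.succ_eq_add_one, getD_cons_succ, getD_cons_zero]
    cases a <;> simp

theorem ce_of_nat {α : Type*} (w v : List α) (hl : w.length = v.length) (d : ℕ)
    (h : ∀ j, j < v.length → v[j]? = w[(j + d) % w.length]?) : CyclicallyEqual w v := by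
  refine ⟨hl, (d : ℤ), fun j hj => ?_⟩
  have hN : 0 < w.length := by omega
  have h1 : (((j : ℤ) + (d : ℤ)) % ((w.length : ℕ) : ℤ)).toNat = (j + d) % w.length := by
    rw [show ((j : ℤ) + (d : ℤ)) = (((j + d : ℕ)) : ℤ) by push_cast; ring, ← Int.natCast_mod]
    omega
  rw [h j hj, h1]

theorem ce_symm_of_nat {α : Type*} (w v : List α) (hl : w.length = v.length) (d : ℕ)
    (h : ∀ j, j < v.length → v[j]? = w[(j + d) % w.length]?) : CyclicallyEqual v w := by
  set N := w.length with hN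
  refine ce_of_nat v w hl.symm (N - d % N) (fun j hj => ?_)
  have hN0 : 0 < N := by omega
  have hvN : v.length = N := hl.symm
  rw [hvN]
  set j' := (j + (N - d % N)) % N with hj'def
  have hj'N : j' < N := Nat.mod_lt _ hN0
  have hh := h j' (by omega)
  have key : (j' + d) % N = j := by
    rw [hj'def, Nat.mod_add_mod]
    have hdm := Nat.div_add_mod d N
    have hml : d % N < N := Nat.mod_lt _ hN0
    have hr : N * (d / N + 1) = N * (d / N) + N := by ring
    have h3 : j + (N - d % N) + d = j + N * (d / N + 1) := by omega
    rw [h3, Nat.add_mul_mod_self_left, Nat.mod_eq_of_lt hj]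
  rw [← key]
  exact (hh).symm

theorem ce_refl {α : Type*} (w : List α) : CyclicallyEqual w w :=
  ce_of_nat w w rfl 0 (fun j hj => by rw [Nat.add_zero, Nat.mod_eq_of_lt hj])

theorem ce_count {α : Type*} [DecidableEq α] {x y : List α} (h : CyclicallyEqual x y) (c : α) :
    x.count c = y.count c := by
  obtain ⟨hl, δ, hδ⟩ := h
  rcases Nat.eq_zero_or_pos x.length with h0 | hpos
  · have hx : x = [] := List.length_eq_zero_iff.mp h0
    have hy : y = [] := List.length_eq_zero_iff.mp (by omega)
    rw [hx, hy]
  · set N := x.length with hNdef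
    set d := (δ % (N : ℤ)).toNat with hddef
    have hy : y = x.rotate d := by
      apply List.ext_getElem?
      intro i
      by_cases hi : i < y.length
      · rw [hδ i hi]
        have hil : i < (x.rotate d).length := by rw [List.length_rotate]; omega
        rw [List.getElem?_eq_getElem hil, List.getElem_rotate]
        have hidx : (((i : ℤ) + δ) % ((N : ℕ) : ℤ)).toNat = (i + d) % N := by
          have hNz : ((N : ℕ) : ℤ) ≠ 0 := by omega
          have e1 : ((i : ℤ) + δ) % (N : ℤ) = ((i : ℤ) + δ % (N : ℤ)) % (N : ℤ) := by
            conv_lhs => rw [← Int.mul_ediv_add_emod δ (N : ℤ)]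
            rw [show (i : ℤ) + ((N : ℤ) * (δ / (N : ℤ)) + δ % (N : ℤ))
                = ((i : ℤ) + δ % (N : ℤ)) + (N : ℤ) * (δ / (N : ℤ)) by ring,
              Int.add_mul_emod_self_left]
          have e2 : δ % (N : ℤ) = (d : ℤ) := by
            rw [hddef, Int.toNat_of_nonneg (Int.emod_nonneg δ hNz)]
          rw [e1, e2, show ((i : ℤ) + (d : ℤ)) = (((i + d : ℕ) : ℤ)) by push_cast; ring,
            ← Int.natCast_mod]
          omega
        rw [hidx, List.getElem?_eq_getElem (Nat.mod_lt _ hpos)]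
      · rw [List.getElem?_eq_none (by omega), List.getElem?_eq_none (by rw [List.length_rotate]; omega)]
    rw [hy]
    exact ((List.rotate_perm x d).count_eq c).symm

theorem riffle_blocks {α : Type*} : ∀ (n : ℕ) (a : ℕ → α) (pre suf : ℕ → List α) (h : List α),
    riffle ((range n).map a) (h :: (range n).map fun q => suf q ++ pre (q+1))
      = h ++ ((range n).map fun q => a q :: (suf q ++ pre (q+1))).flatten := by
  intro n
  induction n with
  | zero => intro a pre suf h; simp [riffle]
  | succ n ih =>
    intro a pre suf h
    rw [range_succ_eq_map]
    simp only [List.map_cons, List.map_map, Function.comp_def, Nat.succ_eq_add_one]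
    rw [riffle]
    simp only [headD_cons, tail_cons]
    rw [ih (fun q => a (q+1)) (fun q => pre (q+1)) (fun q => suf (q+1)) (suf 0 ++ pre 1)]
    simp [List.flatten_cons, List.append_assoc]

theorem regroup {α : Type*} (a : ℕ → α) (pre suf : ℕ → List α) : ∀ (m : ℕ),
    pre 0 ++ ((range m).map fun q => a q :: (suf q ++ pre (q+1))).flatten
      = ((range m).map fun q => pre q ++ a q :: suf q).flatten ++ pre m
  | 0 => by simp
  | m + 1 => by
    rw [range_succ]
    simp only [List.map_append, List.flatten_append, List.map_cons, List.map_nil,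
      List.flatten_cons, List.flatten_nil]
    rw [← List.append_assoc, regroup a pre suf m]
    simp [List.append_assoc]

theorem flatten_range_mul {α : Type*} (g : ℕ) (f : ℕ → ℕ → α) : ∀ m : ℕ,
    ((range m).map fun q => (range g).map (f q)).flatten
      = (range (m * g)).map fun t => f (t / g) (t % g)
  | 0 => by simp
  | m + 1 => by
    rw [range_succ]
    simp only [List.map_append, List.flatten_append, List.map_cons, List.map_nil,
      List.flatten_cons, List.flatten_nil, List.append_nil]
    rw [flatten_range_mul g f m, show (m+1)*g = m*g + g by ring, range_add, List.map_append,
      List.map_map]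
    congr 1
    apply List.map_congr_left
    intro r hr
    rw [mem_range] at hr
    have hg : 0 < g := by omega
    simp only [Function.comp_def]
    rw [show m*g + r = g*m + r by ring, Nat.mul_add_div hg, Nat.mul_add_mod,
      Nat.div_eq_of_lt hr, Nat.mod_eq_of_lt hr, add_zero]

def ffn (p : ℕ → ℕ) (A : ℕ → Bool) (q r : ℕ) : Bool :=
  if r ≤ p r then A (if r ≤ q ∧ q < p r then p r else r) else false

def Xfn (p : ℕ → ℕ) (A L : ℕ → Bool) (q r : ℕ) : Bool :=
  if min q (p q) = r then L q else ffn p A q r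

def pref (n : ℕ) (p : ℕ → ℕ) (A : ℕ → Bool) (q : ℕ) : List Bool :=
  if q < n then (range (min q (p q))).map (ffn p A q) else []

def sufx (n : ℕ) (p : ℕ → ℕ) (A : ℕ → Bool) (q : ℕ) : List Bool :=
  (range (n - min q (p q) - 1)).map fun t => ffn p A q (min q (p q) + 1 + t)

def usn (n : ℕ) (p : ℕ → ℕ) (A : ℕ → Bool) : List (List Bool) :=
  pref n p A 0 :: (range n).map fun q => sufx n p A q ++ pref n p A (q+1)

theorem block_eq (n : ℕ) (p : ℕ → ℕ) (A L : ℕ → Bool) (q : ℕ) (hq : q < n) :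
    (range n).map (Xfn p A L q) = pref n p A q ++ L q :: sufx n p A q := by
  have hc : min q (p q) ≤ q := min_le_left _ _
  rw [pref, if_pos hq, sufx]
  conv_lhs => rw [show n = (min q (p q) + 1) + (n - min q (p q) - 1) by omega]
  rw [range_add, range_succ, List.map_append, List.map_append, List.map_map,
    List.append_assoc]
  congr 1
  · apply List.map_congr_left
    intro r hr
    rw [mem_range] at hr
    rw [Xfn, if_neg (by omega)]
  · simp only [List.map_cons, List.map_nil, List.singleton_append]
    congr 1
    · rw [Xfn, if_pos rfl]
    · apply List.map_congr_left
      intro t _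
      simp only [Function.comp_def]
      rw [Xfn, if_neg (by omega)]

theorem riffle_eq_Xl (n : ℕ) (p : ℕ → ℕ) (A L : ℕ → Bool) :
    riffle ((range n).map L) (usn n p A)
      = (range (n * n)).map fun t => Xfn p A L (t / n) (t % n) := by
  rw [usn, riffle_blocks n L (pref n p A) (sufx n p A) (pref n p A 0),
    regroup L (pref n p A) (sufx n p A) n]
  rw [show pref n p A n = [] from by rw [pref, if_neg (lt_irrefl n)]]
  rw [List.append_nil, ← flatten_range_mul n (fun q r => Xfn p A L q r) n]
  congr 1
  apply List.map_congr_left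
  intro q hq
  rw [mem_range] at hq
  exact (block_eq n p A L q hq).symm

theorem rot_step (n : ℕ) (p : ℕ → ℕ) (A : ℕ → Bool)
    (hpn : ∀ j, j < n → p j < n) (hpp : ∀ j, j < n → p (p j) = j)
    (q r : ℕ) (hq : q < n) (hr : r < n) :
    Xfn p A (fun j => A (p j)) q r = Xfn p A A ((q + 1) % n) r := by
  set q' := (q + 1) % n with hq'def
  have hq' : q' < n := Nat.mod_lt _ (by omega)
  have hpq : p q < n := hpn q hq
  have hpq' : p q' < n := hpn q' hq'
  have hprn : p r < n := hpn r hr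
  have hppq : p (p q) = q := hpp q hq
  have hppq' : p (p q') = q' := hpp q' hq'
  have hppr : p (p r) = r := hpp r hr
  have hcase : (q + 1 < n ∧ q' = q + 1) ∨ (q + 1 = n ∧ q' = 0) := by
    rcases Nat.lt_or_ge (q + 1) n with h | h
    · exact Or.inl ⟨h, Nat.mod_eq_of_lt h⟩
    · have h1 : q + 1 = n := by omega
      exact Or.inr ⟨h1, by rw [hq'def, h1, Nat.mod_self]⟩
  rw [Xfn, Xfn]
  by_cases h1 : min q (p q) = r
  · by_cases h2 : min q' (p q') = r
    · rw [if_pos h1, if_pos h2]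
      -- A (p q) = A q'
      have hqq : q' = q ∨ q' = p q := by
        rcases min_cases q' (p q') with ⟨e, _⟩ | ⟨e, _⟩
        · -- min = q', so q' = r, and r = min q (p q) ∈ {q, p q}
          rcases min_cases q (p q) with ⟨e', _⟩ | ⟨e', _⟩
          · left; omega
          · right; omega
        · -- min = p q', so p q' = r ∈ {q, p q}
          rcases min_cases q (p q) with ⟨e', _⟩ | ⟨e', _⟩
          · -- p q' = q, so q' = p (p q') = p q
            right; rw [← hppq']; congr 1; omega
          · -- p q' = p q, so q' = q
            left; rw [← hppq', ← hppq]; congr 1; omega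
      rcases hqq with h | h
      · have hn1 : q = 0 ∧ n = 1 := by rcases hcase with ⟨a, b⟩ | ⟨a, b⟩ <;> omega
        have hp0 : p q = q := by omega
        rw [hp0, h]
      · rw [h]
    · rw [if_pos h1, if_neg h2]
      -- A (p q) = ffn p A q' r
      have hne1 : q' ≠ q := by
        intro h; apply h2; rw [h]; exact h1
      have hne2 : q' ≠ p q := by
        intro h; apply h2; rw [h, hppq, min_comm]; exact h1
      rcases min_cases q (p q) with ⟨e, le⟩ | ⟨e, lt⟩
      · -- r = q ≤ p q
        have hrq : r = q := by omega
        subst hrq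
        rw [ffn, if_pos le]
        by_cases hs : p r = r
        · rw [hs, if_neg (by omega)]
        · -- r < p r, q' = r + 1 < n, r + 1 < p r
          rcases hcase with ⟨hlt, he⟩ | ⟨hn1, he⟩
          · rw [if_pos ⟨by omega, by omega⟩]
          · omega
      · -- r = p q < q
        have hrp : r = p q := by omega
        subst hrp
        rw [ffn, hppq, if_pos (by omega)]
        rcases hcase with ⟨hlt, he⟩ | ⟨hn1, he⟩
        · rw [if_neg (by omega)]
        · rw [if_neg (by omega)]
  · by_cases h2 : min q' (p q') = r
    · rw [if_neg h1, if_pos h2]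
      -- ffn p A q r = A q'
      have hne1 : q ≠ q' := by
        intro h; apply h1; rw [h]; exact h2
      have hne2 : q ≠ p q' := by
        intro h; apply h1; rw [h, hppq', min_comm]; exact h2
      rcases min_cases q' (p q') with ⟨e, le⟩ | ⟨e, lt⟩
      · -- r = q' ≤ p q'
        have hrq : r = q' := by omega
        subst hrq
        rw [ffn, if_pos le]
        rcases hcase with ⟨hlt, he⟩ | ⟨hn1, he⟩
        · rw [if_neg (by omega)]
        · rw [if_neg (by omega)]
      · -- r = p q' < q'
        have hrp : r = p q' := by omega
        subst hrp
        rw [ffn, hppq', if_pos (by omega)]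
        rcases hcase with ⟨hlt, he⟩ | ⟨hn1, he⟩
        · rw [if_pos ⟨by omega, by omega⟩]
        · omega
    · rw [if_neg h1, if_neg h2]
      -- ffn p A q r = ffn p A q' r
      rw [ffn, ffn]
      by_cases hle : r ≤ p r
      · rw [if_pos hle, if_pos hle]
        have hq_ne1 : q ≠ r := by
          intro h; apply h1; rw [h]; exact min_eq_left hle
        have hq_ne2 : q ≠ p r := by
          intro h; apply h1; rw [h, hppr, min_comm]; exact min_eq_left hle
        have hq'_ne1 : q' ≠ r := by
          intro h; apply h2; rw [h]; exact min_eq_left hle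
        have hq'_ne2 : q' ≠ p r := by
          intro h; apply h2; rw [h, hppr, min_comm]; exact min_eq_left hle
        have hiff : (r ≤ q ∧ q < p r) ↔ (r ≤ q' ∧ q' < p r) := by
          rcases hcase with ⟨hlt, he⟩ | ⟨hn1, he⟩ <;> constructor <;> intro hc <;>
            constructor <;> omega
        by_cases hc : r ≤ q ∧ q < p r
        · rw [if_pos hc, if_pos (hiff.mp hc)]
        · rw [if_neg hc, if_neg (fun h => hc (hiff.mpr h))]
      · rw [if_neg hle, if_neg hle]


/-- Two binary words of the same length are cyclically equalizable if and only if
their Hamming weights coincide. -/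
theorem two_binary_words_cyclically_equalizable_iff
    (n : ℕ) (w₁ w₂ : List Bool) (h₁ : w₁.length = n) (h₂ : w₂.length = n) :
    CyclicallyEqualizable (Set.univ : Set Bool) ![w₁, w₂] ↔
      w₁.count true = w₂.count true := by
  constructor
  · rintro ⟨w', ⟨us, -, -, hw⟩, hcyc⟩
    have e0 : w' 0 = riffle w₁ us := by simpa using hw 0
    have e1 : w' 1 = riffle w₂ us := by simpa using hw 1
    have hc := ce_count (hcyc 0 1) true
    rw [e0, e1, count_riffle, count_riffle] at hc
    omega
  · intro hcount
    classical
    set f₁ : ℕ → Bool := fun j => w₁.getD j false with hf₁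
    set f₂ : ℕ → Bool := fun j => w₂.getD j false with hf₂
    set dA := (range n).filter (fun j => f₁ j && !f₂ j) with hdA
    set dB := (range n).filter (fun j => !f₁ j && f₂ j) with hdB
    have memA : ∀ j, j ∈ dA ↔ j < n ∧ f₁ j = true ∧ f₂ j = false := by
      intro j; rw [hdA, mem_filter, mem_range]; simp [and_assoc]
    have memB : ∀ j, j ∈ dB ↔ j < n ∧ f₁ j = false ∧ f₂ j = true := by
      intro j; rw [hdB, mem_filter, mem_range]; simp [and_assoc]
    have nodupA : dA.Nodup := (nodup_range (n := n)).filter _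
    have nodupB : dB.Nodup := (nodup_range (n := n)).filter _
    have hlenAB : dA.length = dB.length := by
      have c1 : w₁.count true = (range n).countP f₁ := by
        rw [count_true_eq, h₁]
      have c2 : w₂.count true = (range n).countP f₂ := by
        rw [count_true_eq, h₂]
      have s1 := countP_split f₁ f₂ (range n)
      have s2 := countP_split f₂ f₁ (range n)
      have comm1 : (range n).countP (fun x => f₂ x && f₁ x)
          = (range n).countP (fun x => f₁ x && f₂ x) := by
        apply List.countP_congr; intro x _; rw [Bool.and_comm]
      have comm2 : (range n).countP (fun x => f₂ x && !f₁ x) = dB.length := by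
        rw [hdB, ← countP_eq_length_filter]
        apply List.countP_congr; intro x _; rw [Bool.and_comm]
      have lA : dA.length = (range n).countP (fun x => f₁ x && !f₂ x) := by
        rw [hdA, ← countP_eq_length_filter]
      omega
    set p : ℕ → ℕ := fun j =>
      if j ∈ dA then dB.getD (dA.idxOf j) 0
      else if j ∈ dB then dA.getD (dB.idxOf j) 0 else j with hp
    have punfold : ∀ x, p x = if x ∈ dA then dB.getD (dA.idxOf x) 0
        else if x ∈ dB then dA.getD (dB.idxOf x) 0 else x := fun x => by
      simp only [hp]
    have pvalA : ∀ j, j ∈ dA → p j ∈ dB ∧ dB.idxOf (p j) = dA.idxOf j := by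
      intro j hj
      have hidx : dA.idxOf j < dA.length := idxOf_lt_length_iff.mpr hj
      have hidx' : dA.idxOf j < dB.length := by omega
      have hpj : p j = dB[dA.idxOf j]'hidx' := by
        rw [punfold j, if_pos hj, getD_eq_getElem?_getD, getElem?_eq_getElem hidx',
          Option.getD_some]
      rw [hpj]
      exact ⟨getElem_mem _, Nodup.idxOf_getElem nodupB _ _⟩
    have disjAB : ∀ j, j ∈ dA → j ∉ dB := by
      intro j hjA hjB
      rw [memA] at hjA; rw [memB] at hjB
      obtain ⟨-, e1, -⟩ := hjA
      obtain ⟨-, e2, -⟩ := hjB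
      rw [e1] at e2
      exact Bool.noConfusion e2
    have pvalB : ∀ j, j ∈ dB → p j ∈ dA ∧ dA.idxOf (p j) = dB.idxOf j := by
      intro j hj
      have hnotA : j ∉ dA := fun h => disjAB j h hj
      have hidx : dB.idxOf j < dB.length := idxOf_lt_length_iff.mpr hj
      have hidx' : dB.idxOf j < dA.length := by omega
      have hpj : p j = dA[dB.idxOf j]'hidx' := by
        rw [punfold j, if_neg hnotA, if_pos hj, getD_eq_getElem?_getD,
          getElem?_eq_getElem hidx', Option.getD_some]
      rw [hpj]
      exact ⟨getElem_mem _, Nodup.idxOf_getElem nodupA _ _⟩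
    have hpn : ∀ j, j < n → p j < n := by
      intro j hj
      by_cases hA : j ∈ dA
      · exact ((memB _).mp (pvalA j hA).1).1
      · by_cases hB : j ∈ dB
        · exact ((memA _).mp (pvalB j hB).1).1
        · rw [punfold j, if_neg hA, if_neg hB]; exact hj
    have hppj : ∀ j, j < n → p (p j) = j := by
      intro j hj
      by_cases hA : j ∈ dA
      · obtain ⟨hmem, hix⟩ := pvalA j hA
        have hnotA : p j ∉ dA := fun h => disjAB _ h hmem
        have hidx : dA.idxOf j < dA.length := idxOf_lt_length_iff.mpr hA
        rw [punfold (p j), if_neg hnotA, if_pos hmem, hix, getD_eq_getElem?_getD,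
          getElem?_eq_getElem hidx, Option.getD_some, getElem_idxOf]
      · by_cases hB : j ∈ dB
        · obtain ⟨hmem, hix⟩ := pvalB j hB
          have hnotB : p j ∉ dB := disjAB _ hmem
          have hidx : dB.idxOf j < dB.length := idxOf_lt_length_iff.mpr hB
          rw [punfold (p j), if_pos hmem, hix, getD_eq_getElem?_getD,
            getElem?_eq_getElem hidx, Option.getD_some, getElem_idxOf]
        · have hpj : p j = j := by rw [punfold j, if_neg hA, if_neg hB]
          rw [hpj, hpj]
    have hpB : ∀ j, j < n → f₂ j = f₁ (p j) := by
      intro j hj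
      by_cases hA : j ∈ dA
      · have ha := (memA j).mp hA
        have hb := (memB _).mp (pvalA j hA).1
        rw [ha.2.2, hb.2.1]
      · by_cases hB : j ∈ dB
        · have ha := (memB j).mp hB
          have hb := (memA _).mp (pvalB j hB).1
          rw [ha.2.2, hb.2.1]
        · have hpj : p j = j := by rw [punfold j, if_neg hA, if_neg hB]
          rw [hpj]
          rw [memA] at hA
          rw [memB] at hB
          cases hb1 : f₁ j <;> cases hb2 : f₂ j
          · rfl
          · exact absurd ⟨hj, hb1, hb2⟩ hB
          · exact absurd ⟨hj, hb1, hb2⟩ hA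
          · rfl
    have f₁val : ∀ i, i < w₁.length → f₁ i = w₁[i]! := by
      intro i h
      simp only [hf₁]
      rw [getD_eq_getElem?_getD, getElem?_eq_getElem h, Option.getD_some,
        getElem!_pos w₁ i h]
    have f₂val : ∀ i, i < w₂.length → f₂ i = w₂[i]! := by
      intro i h
      simp only [hf₂]
      rw [getD_eq_getElem?_getD, getElem?_eq_getElem h, Option.getD_some,
        getElem!_pos w₂ i h]
    have hw1 : w₁ = (range n).map f₁ := by
      apply List.ext_getElem?
      intro i
      by_cases hi : i < n
      · have hi1 : i < w₁.length := by omega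
        rw [getElem?_map, getElem?_range hi, Option.map_some, getElem?_eq_getElem hi1]
        rw [f₁val i hi1, getElem!_pos w₁ i hi1]
      · rw [List.getElem?_eq_none (by omega), List.getElem?_eq_none (by
          rw [length_map, length_range]; omega)]
    have hw2 : w₂ = (range n).map (fun j => f₁ (p j)) := by
      apply List.ext_getElem?
      intro i
      by_cases hi : i < n
      · have hi1 : i < w₂.length := by omega
        rw [getElem?_map, getElem?_range hi, Option.map_some, getElem?_eq_getElem hi1]
        rw [← hpB i hi, f₂val i hi1, getElem!_pos w₂ i hi1]
      · rw [List.getElem?_eq_none (by omega), List.getElem?_eq_none (by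
          rw [length_map, length_range]; omega)]
    refine ⟨![(range (n*n)).map (fun t => Xfn p f₁ f₁ (t/n) (t%n)),
              (range (n*n)).map (fun t => Xfn p f₁ (fun j => f₁ (p j)) (t/n) (t%n))],
            ⟨usn n p f₁, fun u _ c _ => Set.mem_univ c, ?_, ?_⟩, ?_⟩
    · intro i
      have husl : (usn n p f₁).length = n + 1 := by
        rw [usn]; simp
      rw [husl]
      fin_cases i
      · show n + 1 = w₁.length + 1
        rw [h₁]
      · show n + 1 = w₂.length + 1
        rw [h₂]
    · intro i
      fin_cases i
      · simp only [Matrix.cons_val_zero]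
        rw [hw1]
        exact (riffle_eq_Xl n p f₁ f₁).symm
      · simp only [Matrix.cons_val_one, Matrix.head_cons]
        rw [hw2]
        exact (riffle_eq_Xl n p f₁ (fun j => f₁ (p j))).symm
    · have hrot : ∀ t, t < n*n →
          ((range (n*n)).map (fun t => Xfn p f₁ (fun j => f₁ (p j)) (t/n) (t%n)))[t]?
            = ((range (n*n)).map (fun t => Xfn p f₁ f₁ (t/n) (t%n)))[(t + n) % (n*n)]? := by
        intro t ht
        have hn0 : 0 < n := by
          by_contra h
          push_neg at h
          have : n = 0 := by omega
          subst this
          simp at ht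
        have hnn : 0 < n*n := Nat.mul_pos hn0 hn0
        have hmod : (t + n) % (n*n) < n*n := Nat.mod_lt _ hnn
        rw [getElem?_map, getElem?_map, getElem?_range ht, getElem?_range hmod]
        simp only [Option.map_some]
        have hq : t / n < n := by rw [Nat.div_lt_iff_lt_mul hn0]; exact ht
        have hr : t % n < n := Nat.mod_lt _ hn0
        have hdm := Nat.div_add_mod t n
        have e12 : (t + n) % (n*n) / n = (t/n + 1) % n ∧ (t + n) % (n*n) % n = t % n := by
          rcases Nat.lt_or_ge (t/n + 1) n with hlt | hge
          · have hmul : n * (t/n + 1) = n * (t/n) + n := by ring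
            have hmul2 : n * (t/n + 2) = n * (t/n) + 2*n := by ring
            have hmul3 : n * (t/n + 2) ≤ n * n := Nat.mul_le_mul_left n (by omega)
            have e : t + n = n * (t/n + 1) + t % n := by omega
            have hlt2 : t + n < n * n := by omega
            rw [Nat.mod_eq_of_lt hlt2, e, Nat.mul_add_div hn0, Nat.mul_add_mod,
              Nat.div_eq_of_lt hr, Nat.mod_eq_of_lt hr, add_zero, Nat.mod_eq_of_lt hlt]
            exact ⟨rfl, rfl⟩
          · have hq1 : t/n + 1 = n := by omega
            have hmul : n * (t/n + 1) = n * (t/n) + n := by ring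
            have hmul2 : n * (t/n + 1) = n * n := by rw [hq1]
            have hle : n ≤ n * n := Nat.le_mul_of_pos_left n hn0
            have e : t + n = n*n + t % n := by omega
            rw [e, Nat.add_mod_left, Nat.mod_eq_of_lt (by omega), Nat.div_eq_of_lt hr,
              Nat.mod_eq_of_lt hr, hq1, Nat.mod_self]
            exact ⟨rfl, rfl⟩
        rw [e12.1, e12.2]
        exact congrArg some (rot_step n p f₁ hpn hppj (t/n) (t%n) hq hr)
      intro i j
      fin_cases i <;> fin_cases j <;>
        simp only [Matrix.cons_val_zero, Matrix.cons_val_one, Matrix.head_cons]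
      · exact ce_refl _
      · show CyclicallyEqual ((range (n*n)).map (fun t => Xfn p f₁ f₁ (t/n) (t%n)))
          ((range (n*n)).map (fun t => Xfn p f₁ (fun j => f₁ (p j)) (t/n) (t%n)))
        apply ce_of_nat _ _ (by simp) n
        intro j hj
        have hj' : j < n*n := by simpa using hj
        have hlw : ((range (n*n)).map (fun t => Xfn p f₁ f₁ (t/n) (t%n))).length = n*n := by
          simp
        rw [hlw]
        exact hrot j hj'
      · show CyclicallyEqual ((range (n*n)).map (fun t => Xfn p f₁ (fun j => f₁ (p j)) (t/n) (t%n)))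
          ((range (n*n)).map (fun t => Xfn p f₁ f₁ (t/n) (t%n)))
        apply ce_symm_of_nat _ _ (by simp) n
        intro j hj
        have hj' : j < n*n := by simpa using hj
        have hlw : ((range (n*n)).map (fun t => Xfn p f₁ f₁ (t/n) (t%n))).length = n*n := by
          simp
        rw [hlw]
        exact hrot j hj'
      · exact ce_refl _
end

section
/- Let Δ ⊆ Σ and suppose that k words w′₁,…,w′_k ∈ Σ^{n′} are obtained from k words w₁,…,w_k ∈ Σⁿ by a Δ-deletion. Then w₁,…,w_k are Δ-cyclically equalizable if and only if w′₁,…,w′_k are Δ-cyclically equalizable. -/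
namespace DelPres

variable {α : Type*}

theorem riffle_nil (us : List (List α)) : riffle ([] : List α) us = us.flatten := rfl

theorem riffle_cons (a : α) (w : List α) (us : List (List α)) :
    riffle (a :: w) us = us.headD [] ++ a :: riffle w us.tail := rfl

theorem riffle_length (w : List α) : ∀ us : List (List α),
    (riffle w us).length = w.length + (us.map List.length).sum := by
  induction w with
  | nil => intro us; simp [riffle_nil]
  | cons a w ih =>
    intro us
    rcases us with _ | ⟨u, us⟩
    · simp [riffle_cons, ih]
    · simp [riffle_cons, ih]; omega

/-- interleave the letters of `w` with gaps from `ts`, no trailing gap. -/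
def interleave : List α → List (List α) → List α
  | [], _ => []
  | a :: w, ts => ts.headD [] ++ a :: interleave w ts.tail

theorem flatten_headD_tail (ts : List (List α)) :
    ts.headD [] ++ ts.tail.flatten = ts.flatten := by
  cases ts <;> simp

theorem riffle_eq_interleave (w : List α) : ∀ ts : List (List α),
    riffle w ts = interleave w ts ++ (ts.drop w.length).flatten := by
  induction w with
  | nil => intro ts; simp [riffle_nil, interleave]
  | cons a w ih =>
    intro ts
    rw [riffle_cons, interleave, ih, List.drop_tail]
    simp [List.append_assoc]

theorem riffle_append (u : List α) : ∀ (r : List α) (ts : List (List α)),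
    riffle (u ++ r) ts = interleave u ts ++ riffle r (ts.drop u.length) := by
  induction u with
  | nil => intro r ts; simp [interleave]
  | cons a u ih =>
    intro r ts
    rw [List.cons_append, riffle_cons, interleave, ih, List.drop_tail]
    simp [List.append_assoc]

theorem mem_interleave {Δ : Set α} {w : List α} : ∀ {ts : List (List α)},
    (∀ c ∈ w, c ∈ Δ) → (∀ t ∈ ts, ∀ c ∈ t, c ∈ Δ) → ∀ c ∈ interleave w ts, c ∈ Δ := by
  induction w with
  | nil => intro ts _ _ c hc; simp [interleave] at hc
  | cons a w ih =>
    intro ts hw hts c hc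
    rw [interleave] at hc
    rcases List.mem_append.1 hc with hc | hc
    · rcases ts with _ | ⟨t, ts⟩
      · simp at hc
      · exact hts t (by simp) c hc
    · rcases List.mem_cons.1 hc with rfl | hc
      · exact hw c (by simp)
      · exact ih (fun c hc => hw c (by simp [hc]))
          (fun t ht => hts t (List.mem_of_mem_tail ht)) c hc

def glue : List (List α) → List (List α) → List (List α)
  | [], _ => []
  | u :: us, ts =>
      (interleave u ts ++ (ts.drop u.length).headD []) :: glue us (ts.drop (u.length + 1))

theorem glue_length (us : List (List α)) : ∀ ts, (glue us ts).length = us.length := by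
  induction us with
  | nil => intro ts; simp [glue]
  | cons u us ih => intro ts; simp [glue, ih]

theorem mem_glue {Δ : Set α} (us : List (List α)) :
    ∀ ts, (∀ u ∈ us, ∀ c ∈ u, c ∈ Δ) → (∀ t ∈ ts, ∀ c ∈ t, c ∈ Δ) →
      ∀ g ∈ glue us ts, ∀ c ∈ g, c ∈ Δ := by
  induction us with
  | nil => intro ts _ _ g hg; simp [glue] at hg
  | cons u us ih =>
    intro ts hus hts g hg
    rw [glue] at hg
    rcases List.mem_cons.1 hg with rfl | hg
    · intro c hc
      rcases List.mem_append.1 hc with hc | hc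
      · exact mem_interleave (hus u (by simp)) hts c hc
      · rcases h : ts.drop u.length with _ | ⟨t, ts'⟩
        · simp [h] at hc
        · exact hts t (List.mem_of_mem_drop (h ▸ (by simp : t ∈ t :: ts'))) c (by simpa [h] using hc)
    · exact ih _ (fun u' hu' => hus u' (by simp [hu'])) 
        (fun t ht => hts t (List.mem_of_mem_drop ht)) g hg

theorem riffle_glue (w' : List α) : ∀ (us ts : List (List α)),
    us.length = w'.length + 1 → ts.length = (riffle w' us).length + 1 →
    riffle (riffle w' us) ts = riffle w' (glue us ts) := by
  induction w' with
  | nil =>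
    intro us ts hus hts
    obtain ⟨u, rfl⟩ : ∃ u, us = [u] := List.length_eq_one_iff.1 hus
    have h1 : (riffle ([] : List α) [u]) = u := by simp [riffle_nil]
    rw [h1] at hts
    rw [h1, riffle_nil, glue, glue]
    obtain ⟨t, ht⟩ : ∃ t, ts.drop u.length = [t] := by
      apply List.length_eq_one_iff.1
      rw [List.length_drop, hts]; omega
    have h2 : ts.drop (u.length + 1) = [] := by
      have := congrArg List.length ht
      simp [List.length_drop] at this ⊢
      omega
    rw [riffle_eq_interleave, ht]
    simp
  | cons a w'' ih =>
    intro us ts hus hts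
    rcases us with _ | ⟨u, us'⟩
    · simp at hus
    have hus' : us'.length = w''.length + 1 := by simpa using hus
    rw [riffle_cons] at hts ⊢
    simp only [List.headD_cons, List.tail_cons] at hts ⊢
    rw [riffle_append, riffle_cons]
    have hdt : (ts.drop u.length).tail = ts.drop (u.length + 1) := by
      rw [List.tail_drop]
    have hts' : (ts.drop (u.length + 1)).length = (riffle w'' us').length + 1 := by
      rw [List.length_drop]
      rw [List.length_append, List.length_cons] at hts
      omega
    rw [hdt, ih us' (ts.drop (u.length + 1)) hus' hts']
    rw [glue, riffle_cons]
    simp [List.append_assoc]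

def gaps : List α → List α → List α → List (List α)
  | h, [], t => [h ++ t]
  | h, _ :: u, t => h :: gaps [] u t

theorem gaps_length (u : List α) : ∀ h t, (gaps h u t).length = u.length + 1 := by
  induction u with
  | nil => intro h t; simp [gaps]
  | cons a u ih => intro h t; simp [gaps, ih]

theorem riffle_gaps (u : List α) : ∀ h t, riffle u (gaps h u t) = h ++ u ++ t := by
  induction u with
  | nil => intro h t; simp [gaps, riffle_nil]
  | cons a u ih =>
    intro h t
    rw [gaps, riffle_cons]
    simp [ih]

theorem mem_gaps {Δ : Set α} (u : List α) : ∀ h t,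
    (∀ c ∈ h, c ∈ Δ) → (∀ c ∈ t, c ∈ Δ) → ∀ g ∈ gaps h u t, ∀ c ∈ g, c ∈ Δ := by
  induction u with
  | nil =>
    intro h t hh ht g hg c hc
    simp [gaps] at hg
    subst hg
    rcases List.mem_append.1 hc with hc | hc
    · exact hh c hc
    · exact ht c hc
  | cons a u ih =>
    intro h t hh ht g hg c hc
    rw [gaps] at hg
    rcases List.mem_cons.1 hg with rfl | hg
    · exact hh c hc
    · exact ih [] t (by simp) ht g hg c hc

def mergeGaps : List (List α) → List (List α) → List (List α)
  | [], ts2 => ts2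
  | [t], ts2 => (t ++ ts2.headD []) :: ts2.tail
  | t :: t' :: ts1, ts2 => t :: mergeGaps (t' :: ts1) ts2

theorem mergeGaps_length (ts1 : List (List α)) (hne : ts1 ≠ []) :
    ∀ ts2 : List (List α), ts2 ≠ [] →
    (mergeGaps ts1 ts2).length = ts1.length + ts2.length - 1 := by
  induction ts1 with
  | nil => exact absurd rfl hne
  | cons t ts1 ih =>
    intro ts2 h2
    rcases ts1 with _ | ⟨t', ts1⟩
    · rcases ts2 with _ | ⟨h, r⟩
      · exact absurd rfl h2
      · simp [mergeGaps]
    · rw [mergeGaps]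
      simp only [List.length_cons]
      rw [ih (by simp) ts2 h2]
      have : ts2.length ≥ 1 := List.length_pos_iff.2 h2
      simp only [List.length_cons]
      omega

theorem mem_mergeGaps {Δ : Set α} (ts1 : List (List α)) :
    ∀ ts2, (∀ t ∈ ts1, ∀ c ∈ t, c ∈ Δ) → (∀ t ∈ ts2, ∀ c ∈ t, c ∈ Δ) →
      ∀ g ∈ mergeGaps ts1 ts2, ∀ c ∈ g, c ∈ Δ := by
  induction ts1 with
  | nil => intro ts2 _ h2 g hg; exact h2 g hg
  | cons t ts1 ih =>
    intro ts2 h1 h2 g hg c hc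
    rcases ts1 with _ | ⟨t', ts1⟩
    · rw [mergeGaps] at hg
      rcases List.mem_cons.1 hg with rfl | hg
      · rcases List.mem_append.1 hc with hc | hc
        · exact h1 t (by simp) c hc
        · rcases hts2 : ts2 with _ | ⟨h, r⟩
          · simp [hts2] at hc
          · exact h2 h (by simp [hts2]) c (by simpa [hts2] using hc)
      · exact h2 g (List.mem_of_mem_tail hg) c hc
    · rw [mergeGaps] at hg
      rcases List.mem_cons.1 hg with rfl | hg
      · exact h1 g (by simp) c hc
      · exact ih ts2 (fun x hx => h1 x (by simp [hx])) h2 g hg c hc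

theorem riffle_prepend (w : List α) (x h : List α) (rest : List (List α)) :
    riffle w ((x ++ h) :: rest) = x ++ riffle w (h :: rest) := by
  cases w <;> simp [riffle_nil, riffle_cons]

theorem riffle_append_merge (w1 : List α) : ∀ (ts1 : List (List α)) (w2 : List α)
    (ts2 : List (List α)), ts1.length = w1.length + 1 → ts2 ≠ [] →
    riffle w1 ts1 ++ riffle w2 ts2 = riffle (w1 ++ w2) (mergeGaps ts1 ts2) := by
  induction w1 with
  | nil =>
    intro ts1 w2 ts2 h1 h2
    obtain ⟨t, rfl⟩ : ∃ t, ts1 = [t] := List.length_eq_one_iff.1 h1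
    rcases ts2 with _ | ⟨h, r⟩
    · exact absurd rfl h2
    · rw [mergeGaps]
      simp only [List.headD_cons, List.tail_cons, List.nil_append]
      rw [riffle_prepend]
      simp [riffle_nil]
  | cons a w1 ih =>
    intro ts1 w2 ts2 h1 h2
    rcases ts1 with _ | ⟨t, ts1⟩
    · simp at h1
    have hne : ts1 ≠ [] := by
      intro h; subst h; simp at h1
    rcases ts1 with _ | ⟨t', ts1⟩
    · exact absurd rfl hne
    rw [mergeGaps, List.cons_append, riffle_cons, riffle_cons]
    simp only [List.headD_cons, List.tail_cons, List.cons_append]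
    rw [List.append_assoc]
    congr 1
    rw [List.cons_append]
    congr 1
    exact ih _ w2 ts2 (by simpa using h1) h2

def expand (U : List α) (l : List α) : List α := (l.map fun a => U ++ a :: U).flatten

theorem expand_nil (U : List α) : expand U [] = [] := rfl

theorem expand_cons (U : List α) (a : α) (l : List α) :
    expand U (a :: l) = U ++ a :: (U ++ expand U l) := by
  simp [expand]

theorem expand_append (U : List α) (l1 l2 : List α) :
    expand U (l1 ++ l2) = expand U l1 ++ expand U l2 := by
  simp [expand]

theorem mem_expand {Δ : Set α} {U : List α} (hU : ∀ c ∈ U, c ∈ Δ) {l : List α}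
    (hl : ∀ c ∈ l, c ∈ Δ) : ∀ c ∈ expand U l, c ∈ Δ := by
  intro c hc
  simp only [expand, List.mem_flatten, List.mem_map] at hc
  obtain ⟨x, ⟨a, ha, rfl⟩, hcx⟩ := hc
  rcases List.mem_append.1 hcx with h | h
  · exact hU c h
  · rcases List.mem_cons.1 h with rfl | h
    · exact hl c ha
    · exact hU c h

theorem exists_flatten_decomp (us : List (List α)) :
    ∀ u ∈ us, ∃ P S, us.flatten = P ++ u ++ S := by
  induction us with
  | nil => intro u hu; simp at hu
  | cons x us ih =>
    intro u hu
    rcases List.mem_cons.1 hu with rfl | hu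
    · exact ⟨[], us.flatten, by simp⟩
    · obtain ⟨P, S, hPS⟩ := ih u hu
      exact ⟨x ++ P, S, by simp [hPS]⟩

theorem main_lemma {Δ : Set α} (U : List α) (hU : ∀ c ∈ U, c ∈ Δ) :
    ∀ (m : ℕ) (us vs : List (List α)),
      us.length = m + 1 → vs.length = m + 1 →
      (∀ u ∈ us, ∃ P S, U = P ++ u ++ S) →
      (∀ v ∈ vs, ∀ c ∈ v, c ∈ Δ) →
      ∃ ts : List (List α),
        (∀ t ∈ ts, ∀ c ∈ t, c ∈ Δ) ∧
        ts.length = m + (us.map List.length).sum + 1 ∧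
        ∀ w₀ : List α, w₀.length = m →
          U ++ expand U (riffle w₀ vs) = riffle (riffle w₀ us) ts := by
  intro m
  induction m with
  | zero =>
    intro us vs hus hvs hsub hvsΔ
    obtain ⟨u, rfl⟩ : ∃ u, us = [u] := List.length_eq_one_iff.1 hus
    obtain ⟨v, rfl⟩ : ∃ v, vs = [v] := List.length_eq_one_iff.1 hvs
    obtain ⟨P, S, hPS⟩ := hsub u (by simp)
    have hPΔ : ∀ c ∈ P, c ∈ Δ := fun c hc => hU c (by simp [hPS, hc])
    have hSΔ : ∀ c ∈ S, c ∈ Δ := fun c hc => hU c (by simp [hPS, hc])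
    have hEΔ : ∀ c ∈ expand U v, c ∈ Δ := mem_expand hU (hvsΔ v (by simp))
    refine ⟨gaps P u (S ++ expand U v), ?_, by simp [gaps_length], ?_⟩
    · refine mem_gaps u P (S ++ expand U v) hPΔ ?_
      intro c hc
      rcases List.mem_append.1 hc with hc | hc
      · exact hSΔ c hc
      · exact hEΔ c hc
    · intro w₀ hw₀
      rw [List.length_eq_zero_iff.1 hw₀]
      have h1 : riffle ([] : List α) [v] = v := by simp [riffle_nil]
      have h2 : riffle ([] : List α) [u] = u := by simp [riffle_nil]
      rw [h1, h2, riffle_gaps, hPS]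
      simp
  | succ m ih =>
    intro us vs hus hvs hsub hvsΔ
    rcases us with _ | ⟨u, us₁⟩; · simp at hus
    rcases vs with _ | ⟨v, vs₁⟩; · simp at hvs
    obtain ⟨P, S, hPS⟩ := hsub u (by simp)
    obtain ⟨ts₁, hts₁Δ, hts₁len, heq₁⟩ := ih us₁ vs₁ (by simpa using hus) (by simpa using hvs)
      (fun x hx => hsub x (by simp [hx])) (fun x hx => hvsΔ x (by simp [hx]))
    have hPΔ : ∀ c ∈ P, c ∈ Δ := fun c hc => hU c (by simp [hPS, hc])
    have hSΔ : ∀ c ∈ S, c ∈ Δ := fun c hc => hU c (by simp [hPS, hc])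
    have hEΔ : ∀ c ∈ expand U v, c ∈ Δ := mem_expand hU (hvsΔ v (by simp))
    refine ⟨mergeGaps (gaps P u (S ++ expand U v ++ U)) ([] :: ts₁), ?_, ?_, ?_⟩
    · refine mem_mergeGaps _ _ ?_ ?_
      · refine mem_gaps u P _ hPΔ ?_
        intro c hc
        rcases List.mem_append.1 hc with hc | hc
        · rcases List.mem_append.1 hc with hc | hc
          · exact hSΔ c hc
          · exact hEΔ c hc
        · exact hU c hc
      · intro t ht c hc
        rcases List.mem_cons.1 ht with rfl | ht
        · simp at hc
        · exact hts₁Δ t ht c hc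
    · rw [mergeGaps_length _ (by simp [gaps]; rcases u with _|⟨x,u⟩ <;> simp [gaps]) _ (by simp)]
      rw [gaps_length]
      simp only [List.length_cons, hts₁len]
      simp only [List.map_cons, List.sum_cons]
      omega
    · intro w₀ hw₀
      rcases w₀ with _ | ⟨a, w₁⟩; · simp at hw₀
      have hw₁ : w₁.length = m := by simpa using hw₀
      rw [riffle_cons, riffle_cons]
      simp only [List.headD_cons, List.tail_cons]
      rw [expand_append, expand_cons]
      have key := heq₁ w₁ hw₁
      calc U ++ (expand U v ++ (U ++ a :: (U ++ expand U (riffle w₁ vs₁))))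
          = (P ++ u ++ (S ++ expand U v ++ U)) ++ (a :: (U ++ expand U (riffle w₁ vs₁))) := by
            rw [hPS]; simp [List.append_assoc]
        _ = riffle u (gaps P u (S ++ expand U v ++ U)) ++
              riffle (a :: riffle w₁ us₁) ([] :: ts₁) := by
            rw [riffle_gaps, riffle_cons]
            simp only [List.headD_cons, List.tail_cons, List.nil_append]
            rw [key]
        _ = riffle (u ++ a :: riffle w₁ us₁) (mergeGaps (gaps P u (S ++ expand U v ++ U)) ([] :: ts₁)) := by
            rw [riffle_append_merge _ _ _ _ (by simp [gaps_length]) (by simp)]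

theorem top_lemma {Δ : Set α} (U : List α) (hU : ∀ c ∈ U, c ∈ Δ)
    (m : ℕ) (us vs : List (List α))
    (hus : us.length = m + 2) (hvs : vs.length = m + 2)
    (hsub : ∀ u ∈ us, ∃ P S, U = P ++ u ++ S)
    (hvsΔ : ∀ v ∈ vs, ∀ c ∈ v, c ∈ Δ) :
    ∃ ts : List (List α),
      (∀ t ∈ ts, ∀ c ∈ t, c ∈ Δ) ∧
      ts.length = (m + 1) + (us.map List.length).sum + 1 ∧
      ∀ w₀ : List α, w₀.length = m + 1 →
        expand U (riffle w₀ vs) = riffle (riffle w₀ us) ts := by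
  rcases us with _ | ⟨u, us₁⟩; · simp at hus
  rcases vs with _ | ⟨v, vs₁⟩; · simp at hvs
  obtain ⟨P, S, hPS⟩ := hsub u (by simp)
  obtain ⟨ts₁, hts₁Δ, hts₁len, heq₁⟩ := main_lemma U hU m us₁ vs₁ (by simpa using hus)
    (by simpa using hvs) (fun x hx => hsub x (by simp [hx]))
    (fun x hx => hvsΔ x (by simp [hx]))
  have hPΔ : ∀ c ∈ P, c ∈ Δ := fun c hc => hU c (by simp [hPS, hc])
  have hSΔ : ∀ c ∈ S, c ∈ Δ := fun c hc => hU c (by simp [hPS, hc])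
  have hEΔ : ∀ c ∈ expand U v, c ∈ Δ := mem_expand hU (hvsΔ v (by simp))
  refine ⟨mergeGaps (gaps (expand U v ++ P) u S) ([] :: ts₁), ?_, ?_, ?_⟩
  · refine mem_mergeGaps _ _ ?_ ?_
    · refine mem_gaps u _ _ ?_ hSΔ
      intro c hc
      rcases List.mem_append.1 hc with hc | hc
      · exact hEΔ c hc
      · exact hPΔ c hc
    · intro t ht c hc
      rcases List.mem_cons.1 ht with rfl | ht
      · simp at hc
      · exact hts₁Δ t ht c hc
  · rw [mergeGaps_length _ (by rcases u with _|⟨x,u⟩ <;> simp [gaps]) _ (by simp)]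
    rw [gaps_length]
    simp only [List.length_cons, hts₁len]
    simp only [List.map_cons, List.sum_cons]
    omega
  · intro w₀ hw₀
    rcases w₀ with _ | ⟨a, w₁⟩; · simp at hw₀
    have hw₁ : w₁.length = m := by simpa using hw₀
    rw [riffle_cons, riffle_cons]
    simp only [List.headD_cons, List.tail_cons]
    rw [expand_append, expand_cons]
    have key := heq₁ w₁ hw₁
    calc expand U v ++ (U ++ a :: (U ++ expand U (riffle w₁ vs₁)))
        = ((expand U v ++ P) ++ u ++ S) ++ (a :: (U ++ expand U (riffle w₁ vs₁))) := by
          rw [hPS]; simp [List.append_assoc]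
      _ = riffle u (gaps (expand U v ++ P) u S) ++
            riffle (a :: riffle w₁ us₁) ([] :: ts₁) := by
          rw [riffle_gaps, riffle_cons]
          simp only [List.headD_cons, List.tail_cons, List.nil_append]
          rw [key]
      _ = riffle (u ++ a :: riffle w₁ us₁)
            (mergeGaps (gaps (expand U v ++ P) u S) ([] :: ts₁)) := by
          rw [riffle_append_merge _ _ _ _ (by simp [gaps_length]) (by simp)]

theorem cyclicallyEqual_iff_isRotated (w₁ w₂ : List α) :
    CyclicallyEqual w₁ w₂ ↔ w₁.IsRotated w₂ := by
  constructor
  · rintro ⟨hlen, δ, h⟩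
    rcases Nat.eq_zero_or_pos w₁.length with h0 | h0
    · have h1 : w₁ = [] := List.length_eq_zero_iff.1 h0
      have h2 : w₂ = [] := List.length_eq_zero_iff.1 (hlen ▸ h0)
      rw [h1, h2]
    · have hnz : (w₁.length : ℤ) ≠ 0 := by exact_mod_cast h0.ne'
      obtain ⟨d, hdd⟩ : ∃ d : ℕ, (d : ℤ) = δ % (w₁.length : ℤ) :=
        ⟨_, Int.toNat_of_nonneg (Int.emod_nonneg δ hnz)⟩
      refine ⟨d, ?_⟩
      apply List.ext_getElem?
      intro j
      rcases Nat.lt_or_ge j w₁.length with hj | hj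
      · rw [List.getElem?_rotate hj, h j (by omega)]
        congr 1
        rw [Int.add_emod, ← hdd, Int.emod_add_emod, ← Nat.cast_add, ← Int.natCast_mod]
        omega
      · rw [List.getElem?_eq_none (by rw [List.length_rotate]; omega),
          List.getElem?_eq_none (by omega)]
  · rintro ⟨d, rfl⟩
    refine ⟨(List.length_rotate w₁ d).symm, (d : ℤ), ?_⟩
    intro j hj
    rw [List.length_rotate] at hj
    rw [List.getElem?_rotate hj]
    congr 1

theorem isRotated_expand (U : List α) {l₁ l₂ : List α} (h : l₁.IsRotated l₂) :
    (expand U l₁).IsRotated (expand U l₂) := by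
  obtain ⟨d, hd, rfl⟩ := List.isRotated_iff_mod.1 h
  rw [List.rotate_eq_drop_append_take hd]
  have h1 : l₁ = l₁.take d ++ l₁.drop d := (List.take_append_drop d l₁).symm
  rw [expand_append]
  nth_rewrite 1 [h1]
  rw [expand_append]
  refine ⟨(expand U (l₁.take d)).length, ?_⟩
  rw [List.rotate_eq_drop_append_take (by simp)]
  rw [List.drop_left, List.take_left]

theorem riffle_replicate_nil (w : List α) : ∀ m, riffle w (List.replicate m ([] : List α)) = w := by
  induction w with
  | nil => intro m; simp [riffle_nil]
  | cons a w ih =>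
    intro m
    rcases m with _ | m
    · rw [riffle_cons]; simpa using ih 0
    · rw [riffle_cons, List.replicate_succ]
      simpa using ih m

theorem cyclicallyEqual_refl (w : List α) : CyclicallyEqual w w :=
  (cyclicallyEqual_iff_isRotated w w).2 (List.IsRotated.refl w)

end DelPres

/-- A `Δ`-deletion preserves `Δ`-cyclic equalizability: if `w'₁, …, w'_k` are
obtained from `w₁, …, w_k` by a `Δ`-deletion (i.e. the `wᵢ` are obtained from the
`w'ᵢ` by a `Δ`-insertion), then the `wᵢ` are `Δ`-cyclically equalizable iff the
`w'ᵢ` are. -/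
theorem deletion_preserves_cyclic_equalizability
    {α : Type*} (Δ : Set α) {k n n' : ℕ} (w w' : Fin k → List α)
    (hn : ∀ i, (w i).length = n) (hn' : ∀ i, (w' i).length = n')
    (hdel : InsertsTo Δ w' w) :
    CyclicallyEqualizable Δ w ↔ CyclicallyEqualizable Δ w' := by
  obtain ⟨us, husΔ, huslen, hw⟩ := hdel
  constructor
  · rintro ⟨v, ⟨ts, htsΔ, htslen, hv⟩, hconj⟩
    refine ⟨v, ⟨DelPres.glue us ts, ?_, ?_, ?_⟩, hconj⟩
    · exact DelPres.mem_glue us ts husΔ htsΔ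
    · intro i; rw [DelPres.glue_length]; exact huslen i
    · intro i
      rw [hv i, hw i, DelPres.riffle_glue _ _ _ (huslen i) (by rw [← hw i]; exact htslen i)]
  · rintro ⟨v, ⟨vs, hvsΔ, hvslen, hv⟩, hconj⟩
    rcases Nat.eq_zero_or_pos k with hk | hk
    · subst hk
      exact ⟨w, ⟨[], by simp, fun i => i.elim0, fun i => i.elim0⟩, fun i j => i.elim0⟩
    · have i₀ : Fin k := ⟨0, hk⟩
      rcases Nat.eq_zero_or_pos n' with hn0 | hn0
      · have hwall : ∀ i, w i = us.flatten := by
          intro i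
          have h0 : w' i = [] := List.length_eq_zero_iff.1 (by rw [hn' i, hn0])
          rw [hw i, h0, DelPres.riffle_nil]
        refine ⟨w, ⟨List.replicate (n + 1) [], ?_, ?_, ?_⟩, ?_⟩
        · intro u hu c hc; rw [List.eq_of_mem_replicate hu] at hc; simp at hc
        · intro i; rw [List.length_replicate, hn i]
        · intro i; exact (DelPres.riffle_replicate_nil (w i) (n + 1)).symm
        · intro i j; rw [hwall i, hwall j]; exact DelPres.cyclicallyEqual_refl _
      · obtain ⟨m, hm⟩ := Nat.exists_eq_succ_of_ne_zero hn0.ne'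
        have hU : ∀ c ∈ us.flatten, c ∈ Δ := by
          intro c hc
          obtain ⟨u, hu, hcu⟩ := List.mem_flatten.1 hc
          exact husΔ u hu c hcu
        obtain ⟨ts, htsΔ, htslen, heq⟩ := DelPres.top_lemma us.flatten hU m us vs
          (by rw [huslen i₀, hn' i₀, hm])
          (by rw [hvslen i₀, hn' i₀, hm])
          (DelPres.exists_flatten_decomp us) hvsΔ
        have e : ∀ i, riffle (w i) ts = DelPres.expand us.flatten (v i) := by
          intro i
          rw [hv i, hw i, ← heq (w' i) (by rw [hn' i, hm])]
        refine ⟨fun i => riffle (w i) ts, ⟨ts, htsΔ, ?_, fun i => rfl⟩, ?_⟩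
        · intro i
          rw [htslen, hw i, DelPres.riffle_length, hn' i, hm]
        · intro i j
          show CyclicallyEqual (riffle (w i) ts) (riffle (w j) ts)
          rw [e i, e j, DelPres.cyclicallyEqual_iff_isRotated]
          exact DelPres.isRotated_expand _
            ((DelPres.cyclicallyEqual_iff_isRotated _ _).1 (hconj i j))
end

section
/- Let w₁ ∈ {0,1}ⁿ be a binary word and let w₂ ∈ {0,1}ⁿ be its bitwise complement (i.e., the j-th letter of w₂ is 1 minus the j-th letter of w₁ for every j). If wt(w₁) = wt(w₂), then w₁ and w₂ are cyclically equalizable. -/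
namespace CEAux
open List

theorem riffle_nil {α : Type*} (us : List (List α)) : riffle [] us = us.flatten := rfl

theorem riffle_cons {α : Type*} (a : α) (w : List α) (u : List α) (us : List (List α)) :
    riffle (a :: w) (u :: us) = u ++ a :: riffle w us := rfl

theorem riffle_append_head {α : Type*} (w : List α) (x y : List α) (us : List (List α)) :
    riffle w ((x ++ y) :: us) = x ++ riffle w (y :: us) := by
  cases w with
  | nil => simp [riffle_nil]
  | cons a w => simp [riffle_cons]

theorem riffle_flat {α : Type*} (A : ℕ → α) (CH : ℕ → List α) (lf rf : ℕ → List α) :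
    ∀ (d t : ℕ) (w : List α),
      w.length = d →
      (∀ i, i < d → w[i]? = some (A (t + i))) →
      (∀ i, i < d → CH (t + i) = rf (t + i) ++ A (t + i) :: lf (t + i + 1)) →
      rf (t + d) = [] →
      riffle w (rf t :: (List.range' (t+1) d).map (fun j => lf j ++ rf j))
        = (List.range' t d).flatMap CH := by
  intro d
  induction d with
  | zero =>
    intro t w hw _ _ hrf
    have hw' : w = [] := List.length_eq_zero_iff.mp hw
    subst hw'
    have h0 : rf t = [] := by simpa using hrf
    simp [riffle_nil, h0]
  | succ d ih =>
    intro t w hw hget hch hrf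
    cases w with
    | nil => simp at hw
    | cons b w' =>
      have hb : b = A t := by
        have := hget 0 (by omega)
        simpa using this
      subst hb
      rw [List.range'_succ, List.map_cons, riffle_cons, riffle_append_head]
      rw [ih (t+1) w' (by simpa using hw)
        (fun i hi => by
          have h2 : t + 1 + i = t + (i+1) := by omega
          rw [h2]
          have := hget (i+1) (by omega)
          rwa [List.getElem?_cons_succ] at this)
        (fun i hi => by
          have h2 : t + 1 + i = t + (i+1) := by omega
          rw [h2]
          exact hch (i+1) (by omega))
        (by
          have h2 : t + 1 + d = t + (d+1) := by omega
          rw [h2]; exact hrf)]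
      rw [List.range'_succ, List.flatMap_cons]
      have h3 := hch 0 (by omega)
      simp only [Nat.add_zero] at h3
      rw [h3]
      simp

theorem flatMap_ofFn_length {α : Type*} {k : ℕ} (f : ℕ → Fin k → α) :
    ∀ (d t : ℕ), ((List.range' t d).flatMap (fun s => List.ofFn (f s))).length = d * k := by
  intro d
  induction d with
  | zero => simp
  | succ d ih =>
    intro t
    rw [List.range'_succ, List.flatMap_cons, List.length_append, ih]
    simp [Nat.succ_mul]
    omega

theorem flatMap_ofFn_getElem? {α : Type*} {k : ℕ} (hk : 0 < k) (f : ℕ → Fin k → α) :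
    ∀ (d t m : ℕ), (hm : m < d * k) →
      ((List.range' t d).flatMap (fun s => List.ofFn (f s)))[m]?
        = some (f (t + m / k) ⟨m % k, Nat.mod_lt _ hk⟩) := by
  intro d
  induction d with
  | zero => intro t m hm; omega
  | succ d ih =>
    intro t m hm
    rw [List.range'_succ, List.flatMap_cons]
    by_cases hmk : m < k
    · rw [List.getElem?_append_left (by simpa using hmk)]
      rw [List.getElem?_eq_getElem (by simpa using hmk), List.getElem_ofFn]
      congr 2
      · rw [Nat.div_eq_of_lt hmk]; omega
      · exact Fin.ext (by simp [Nat.mod_eq_of_lt hmk])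
    · obtain ⟨m', rfl⟩ : ∃ m', m = m' + k := ⟨m - k, by omega⟩
      rw [List.getElem?_append_right (by simpa using Nat.le_add_left k m')]
      have hlen : (List.ofFn (f t)).length = k := List.length_ofFn
      rw [hlen]
      have hm' : m' + k - k = m' := by omega
      rw [hm']
      have hdk : (d+1) * k = d * k + k := by ring
      rw [ih (t+1) m' (by omega)]
      congr 2
      rw [Nat.add_div_right _ hk]
      omega
      · exact Fin.ext (by simp [Nat.add_mod_right])

theorem length_filter_range (p : Bool → Bool) :
    ∀ (l : List Bool),
      ((List.range l.length).filter (fun j => p (l.getD j false))).length = l.countP p := by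
  intro l
  induction l with
  | nil => simp
  | cons x xs ih =>
    rw [List.length_cons, List.range_succ_eq_map, List.filter_cons]
    rw [List.filter_map]
    have hfun : ((fun j => p ((x :: xs).getD j false)) ∘ Nat.succ)
        = fun j => p (xs.getD j false) := by
      funext j
      simp [Function.comp, List.getD_cons_succ]
    rw [hfun, List.countP_cons]
    by_cases hpx : p x
    · rw [if_pos (by simpa using hpx), if_pos hpx]
      rw [List.length_cons, List.length_map, ih]
    · rw [if_neg (by simpa using hpx), if_neg hpx]
      rw [List.length_map, ih]; omega

theorem countP_not_add (p : Bool → Bool) (l : List Bool) :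
    l.countP p + l.countP (fun b => !(p b)) = l.length := by
  induction l with
  | nil => simp
  | cons x xs ih =>
    simp only [List.countP_cons, List.length_cons]
    by_cases hpx : p x <;> simp [hpx] <;> omega

theorem count_true_eq_countP (l : List Bool) : l.count true = l.countP (fun b => b) := by
  rw [List.count]; congr 1; funext b; cases b <;> rfl

theorem count_false_eq_countP (l : List Bool) : l.count false = l.countP (fun b => !b) := by
  rw [List.count]; congr 1; funext b; cases b <;> rfl

theorem cyclicallyEqual_refl {α : Type*} (l : List α) : CyclicallyEqual l l := by
  refine ⟨rfl, 0, fun j hj => ?_⟩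
  have h1 : ((j : ℤ) + 0) % (l.length : ℤ) = (j : ℤ) := by
    rw [Int.add_zero]
    exact Int.emod_eq_of_lt (by positivity) (by exact_mod_cast hj)
  rw [h1]
  simp

end CEAux


namespace CEMain
open List

variable (a : ℕ → Bool) (n : ℕ)

def ones : List ℕ := (List.range n).filter a
def zeros : List ℕ := (List.range n).filter (fun j => !(a j))
def idx (t : ℕ) : ℕ := if a t then (ones a n).idxOf t else (zeros a n).idxOf t
def pos1 (r : ℕ) : ℕ := (ones a n).getD r 0
def pos0 (r : ℕ) : ℕ := (zeros a n).getD r 0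
def Cf (r t : ℕ) : Bool :=
  if min (pos1 a n r) (pos0 a n r) < t ∧ t ≤ max (pos1 a n r) (pos0 a n r) then
    a (max (pos1 a n r) (pos0 a n r))
  else a (min (pos1 a n r) (pos0 a n r))

theorem mem_ones {t : ℕ} : t ∈ ones a n ↔ t < n ∧ a t = true := by
  simp [ones, List.mem_filter, List.mem_range]

theorem mem_zeros {t : ℕ} : t ∈ zeros a n ↔ t < n ∧ a t = false := by
  simp [zeros, List.mem_filter, List.mem_range]

theorem nodup_ones : (ones a n).Nodup := (List.nodup_range).filter _

theorem nodup_zeros : (zeros a n).Nodup := (List.nodup_range).filter _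

variable {k : ℕ} (h1 : (ones a n).length = k) (h0 : (zeros a n).length = k)

include h1 h0

theorem pos1_spec {r : ℕ} (hr : r < k) : pos1 a n r < n ∧ a (pos1 a n r) = true := by
  have hlt : r < (ones a n).length := by omega
  have : pos1 a n r ∈ ones a n := by
    rw [pos1, List.getD_eq_getElem _ _ hlt]
    exact List.getElem_mem hlt
  exact (mem_ones a n).mp this

theorem pos0_spec {r : ℕ} (hr : r < k) : pos0 a n r < n ∧ a (pos0 a n r) = false := by
  have hlt : r < (zeros a n).length := by omega
  have : pos0 a n r ∈ zeros a n := by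
    rw [pos0, List.getD_eq_getElem _ _ hlt]
    exact List.getElem_mem hlt
  exact (mem_zeros a n).mp this

theorem idx_lt {t : ℕ} (ht : t < n) : idx a n t < k := by
  by_cases hat : a t
  · rw [idx, if_pos hat, ← h1]
    exact List.idxOf_lt_length_iff.mpr ((mem_ones a n).mpr ⟨ht, hat⟩)
  · rw [idx, if_neg hat, ← h0]
    exact List.idxOf_lt_length_iff.mpr
      ((mem_zeros a n).mpr ⟨ht, Bool.eq_false_iff.mpr hat⟩)

theorem idx_eq_iff {r t : ℕ} (hr : r < k) (ht : t < n) :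
    r = idx a n t ↔ (t = pos1 a n r ∨ t = pos0 a n r) := by
  constructor
  · intro h
    by_cases hat : a t
    · left
      have hmem : t ∈ ones a n := (mem_ones a n).mpr ⟨ht, hat⟩
      have hlt := List.idxOf_lt_length_iff.mpr hmem
      rw [h, idx, if_pos hat, pos1, List.getD_eq_getElem _ _ hlt]
      exact (List.getElem_idxOf hlt).symm
    · right
      have hmem : t ∈ zeros a n := (mem_zeros a n).mpr ⟨ht, Bool.eq_false_iff.mpr hat⟩
      have hlt := List.idxOf_lt_length_iff.mpr hmem
      rw [h, idx, if_neg hat, pos0, List.getD_eq_getElem _ _ hlt]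
      exact (List.getElem_idxOf hlt).symm
  · intro h
    rcases h with h | h
    · have hsp := pos1_spec a n h1 h0 hr
      have hat : a t = true := h ▸ hsp.2
      have hlt : r < (ones a n).length := by omega
      rw [idx, if_pos hat, h, pos1, List.getD_eq_getElem _ _ hlt]
      exact ((nodup_ones a n).idxOf_getElem r hlt).symm
    · have hsp := pos0_spec a n h1 h0 hr
      have hat : a t = false := h ▸ hsp.2
      have hlt : r < (zeros a n).length := by omega
      rw [idx, if_neg (by simp [hat]), h, pos0, List.getD_eq_getElem _ _ hlt]
      exact ((nodup_zeros a n).idxOf_getElem r hlt).symm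

theorem Cf_letter {t : ℕ} (ht : t < n) : Cf a n (idx a n t) t = a t := by
  have hr : idx a n t < k := idx_lt a n h1 h0 ht
  have h := (idx_eq_iff a n h1 h0 hr ht).mp rfl
  set o := pos1 a n (idx a n t) with ho
  set z := pos0 a n (idx a n t) with hz
  have hao : a o = true := (pos1_spec a n h1 h0 hr).2
  have haz : a z = false := (pos0_spec a n h1 h0 hr).2
  have hoz : o ≠ z := fun hc => by rw [hc, haz] at hao; exact Bool.false_ne_true hao
  rw [Cf, ← ho, ← hz]
  rcases h with h | h <;> rw [h] <;> split_ifs with hcond <;> (congr 1; omega)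

theorem core {r t : ℕ} (hr : r < k) (ht : t < n) :
    (if r = idx a n t then !(a t) else Cf a n r t) = Cf a n r ((t+1) % n) := by
  set o := pos1 a n r with ho
  set z := pos0 a n r with hz
  have hon : o < n := (pos1_spec a n h1 h0 hr).1
  have hzn : z < n := (pos0_spec a n h1 h0 hr).1
  have hao : a o = true := (pos1_spec a n h1 h0 hr).2
  have haz : a z = false := (pos0_spec a n h1 h0 hr).2
  have hoz : o ≠ z := fun hc => by rw [hc, haz] at hao; exact Bool.false_ne_true hao
  have hiff := idx_eq_iff a n h1 h0 hr ht
  by_cases hc : r = idx a n t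
  · rw [if_pos hc]
    have hmem := hiff.mp hc
    -- t is o or z
    rcases hmem with rfl | rfl
    · -- t = o : goal !(a o) = Cf r ((o+1) % n)
      rcases Nat.lt_or_ge o z with hlt | hge
      · -- o < z, so o+1 ≤ z < n, (o+1)%n = o+1, min < o+1 ≤ max holds
        have hmod : (o+1) % n = o+1 := Nat.mod_eq_of_lt (by omega)
        rw [hmod, Cf, ← ho, ← hz, if_pos (by constructor <;> omega)]
        have : max o z = z := by omega
        rw [this, haz, hao]
        rfl
      · -- z < o
        have hzo : z < o := by omega
        by_cases hwrap : o + 1 = n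
        · have hmod : (o+1) % n = 0 := by rw [hwrap, Nat.mod_self]
          rw [hmod, Cf, ← ho, ← hz, if_neg (by omega)]
          have : min o z = z := by omega
          rw [this, haz, hao]
          rfl
        · have hmod : (o+1) % n = o+1 := Nat.mod_eq_of_lt (by omega)
          rw [hmod, Cf, ← ho, ← hz, if_neg (by omega)]
          have : min o z = z := by omega
          rw [this, haz, hao]
          rfl
    · -- t = z
      rcases Nat.lt_or_ge z o with hlt | hge
      · have hmod : (z+1) % n = z+1 := Nat.mod_eq_of_lt (by omega)
        rw [hmod, Cf, ← ho, ← hz, if_pos (by constructor <;> omega)]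
        have : max o z = o := by omega
        rw [this, hao, haz]
        rfl
      · have hoz' : o < z := by omega
        by_cases hwrap : z + 1 = n
        · have hmod : (z+1) % n = 0 := by rw [hwrap, Nat.mod_self]
          rw [hmod, Cf, ← ho, ← hz, if_neg (by omega)]
          have : min o z = o := by omega
          rw [this, hao, haz]
          rfl
        · have hmod : (z+1) % n = z+1 := Nat.mod_eq_of_lt (by omega)
          rw [hmod, Cf, ← ho, ← hz, if_neg (by omega)]
          have : min o z = o := by omega
          rw [this, hao, haz]
          rfl
  · rw [if_neg hc]
    have hto : t ≠ o := fun hc' => hc (hiff.mpr (Or.inl hc'))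
    have htz : t ≠ z := fun hc' => hc (hiff.mpr (Or.inr hc'))
    by_cases hwrap : t + 1 = n
    · have hmod : (t+1) % n = 0 := by rw [hwrap, Nat.mod_self]
      rw [hmod, Cf, Cf, ← ho, ← hz]
      rw [if_neg (by omega), if_neg (by omega)]
    · have hmod : (t+1) % n = t+1 := Nat.mod_eq_of_lt (by omega)
      rw [hmod, Cf, Cf, ← ho, ← hz]
      by_cases hcond : min o z < t ∧ t ≤ max o z
      · rw [if_pos hcond, if_pos (by omega)]
      · rw [if_neg hcond, if_neg (by omega)]

def chunkF (k t : ℕ) : List Bool := List.ofFn (n := k) fun r => Cf a n r t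
def chunkF' (k t : ℕ) : List Bool :=
  List.ofFn (n := k) fun r => if (r : ℕ) = idx a n t then !(a t) else Cf a n r t
def rightf (k t : ℕ) : List Bool :=
  if t < n then (chunkF a n k t).take (idx a n t) else []
def leftf (k t : ℕ) : List Bool :=
  if 1 ≤ t ∧ t ≤ n then (chunkF a n k (t-1)).drop (idx a n (t-1) + 1) else []

theorem Hchunk {t : ℕ} (ht : t < n) :
    chunkF a n k t = rightf a n k t ++ a t :: leftf a n k (t+1) := by
  have hidx : idx a n t < k := idx_lt a n h1 h0 ht
  have hlen : (chunkF a n k t).length = k := List.length_ofFn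
  rw [rightf, if_pos ht, leftf, if_pos ⟨by omega, by omega⟩]
  have h2 : t + 1 - 1 = t := by omega
  rw [h2]
  have hget : (chunkF a n k t)[idx a n t]'(by omega) = a t := by
    simp only [chunkF]
    rw [List.getElem_ofFn]
    exact Cf_letter a n h1 h0 ht
  conv_lhs => rw [← List.take_append_drop (idx a n t) (chunkF a n k t)]
  rw [List.drop_eq_getElem_cons (by omega), hget]

theorem Hchunk' {t : ℕ} (ht : t < n) :
    chunkF' a n k t = rightf a n k t ++ (!(a t)) :: leftf a n k (t+1) := by
  have hidx : idx a n t < k := idx_lt a n h1 h0 ht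
  have hlen' : (chunkF' a n k t).length = k := List.length_ofFn
  have hlen : (chunkF a n k t).length = k := List.length_ofFn
  rw [rightf, if_pos ht, leftf, if_pos ⟨by omega, by omega⟩]
  have h2 : t + 1 - 1 = t := by omega
  rw [h2]
  have htake : (chunkF' a n k t).take (idx a n t) = (chunkF a n k t).take (idx a n t) := by
    apply List.ext_getElem (by simp [chunkF, chunkF'])
    intro i hi1 hi2
    rw [List.getElem_take, List.getElem_take]
    have hii : i < idx a n t := by
      simp only [List.length_take, hlen'] at hi1
      omega
    simp only [chunkF, chunkF']
    rw [List.getElem_ofFn, List.getElem_ofFn]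
    exact if_neg (by simpa using (by omega : ¬ i = idx a n t))
  have hdrop : (chunkF' a n k t).drop (idx a n t + 1)
      = (chunkF a n k t).drop (idx a n t + 1) := by
    apply List.ext_getElem (by simp [chunkF, chunkF'])
    intro i hi1 hi2
    rw [List.getElem_drop, List.getElem_drop]
    simp only [chunkF, chunkF']
    rw [List.getElem_ofFn, List.getElem_ofFn]
    exact if_neg (by simpa using (by omega : ¬ idx a n t + 1 + i = idx a n t))
  have hget : (chunkF' a n k t)[idx a n t]'(by omega) = !(a t) := by
    simp only [chunkF']
    rw [List.getElem_ofFn]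
    exact if_pos (by simp)
  conv_lhs => rw [← List.take_append_drop (idx a n t) (chunkF' a n k t)]
  rw [List.drop_eq_getElem_cons (by omega), hget, htake, hdrop]

end CEMain


/-- If a binary word and its bitwise complement have the same Hamming weight, then
they are cyclically equalizable. -/
theorem complement_cyclically_equalizable
    (n : ℕ) (w₁ w₂ : List Bool) (h₁ : w₁.length = n)
    (hcompl : w₂ = w₁.map (fun a => !a))
    (hwt : w₁.count true = w₂.count true) :
    CyclicallyEqualizable (Set.univ : Set Bool) ![w₁, w₂] := by
  classical
  rcases Nat.eq_zero_or_pos n with hn0 | hnpos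
  · -- trivial case n = 0
    subst hn0
    have hw1 : w₁ = [] := List.length_eq_zero_iff.mp h₁
    subst hcompl
    subst hw1
    refine ⟨![[], []], ⟨[[]], fun u hu c hc => trivial, ?_, ?_⟩, ?_⟩
    · intro i; fin_cases i <;> simp
    · intro i; fin_cases i <;> simp [riffle]
    · intro i j
      fin_cases i <;> fin_cases j <;>
        simpa using CEAux.cyclicallyEqual_refl ([] : List Bool)
  · -- main case
    have hcnt : w₁.count true = w₁.count false := by
      rw [hwt, hcompl]
      have hinj : Function.Injective (fun b : Bool => !b) := by
        intro x y h; cases x <;> cases y <;> simp_all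
      have := List.count_map_of_injective w₁ (fun b : Bool => !b) hinj false
      simpa using this
    set a : ℕ → Bool := fun j => w₁.getD j false with ha
    set k := w₁.count true with hkdef
    have hones : (CEMain.ones a n).length = k := by
      rw [hkdef, CEAux.count_true_eq_countP, CEMain.ones, ← h₁, ha]
      exact CEAux.length_filter_range (fun b => b) w₁
    have hzeros : (CEMain.zeros a n).length = k := by
      rw [hcnt, CEAux.count_false_eq_countP, CEMain.zeros, ← h₁, ha]
      exact CEAux.length_filter_range (fun b => !b) w₁
    have hkpos : 0 < k := by
      by_contra hcon
      have hsum := CEAux.countP_not_add (fun b => b) w₁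
      rw [← CEAux.count_true_eq_countP] at hsum
      have h2 : w₁.countP (fun b => !((fun b : Bool => b) b)) = w₁.count false := by
        rw [CEAux.count_false_eq_countP]
      rw [h2, ← hcnt, ← hkdef, h₁] at hsum
      omega
    have hNpos : 0 < n * k := Nat.mul_pos hnpos hkpos
    set W := (List.range' 0 n).flatMap (CEMain.chunkF a n k) with hWdef
    set W' := (List.range' 0 n).flatMap (CEMain.chunkF' a n k) with hW'def
    set us := CEMain.rightf a n k 0 ::
      (List.range' 1 n).map (fun j => CEMain.leftf a n k j ++ CEMain.rightf a n k j) with husdef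
    have hrfn : ∀ m, ¬ (m < n) → CEMain.rightf a n k m = [] := by
      intro m hm; rw [CEMain.rightf, if_neg hm]
    have hW : riffle w₁ us = W := by
      have := CEAux.riffle_flat a (CEMain.chunkF a n k) (CEMain.leftf a n k)
        (CEMain.rightf a n k) n 0 w₁ h₁
        (fun i hi => by
          rw [List.getElem?_eq_getElem (show i < w₁.length by omega)]
          congr 1
          rw [ha]
          simp only [Nat.zero_add]
          exact (List.getD_eq_getElem w₁ false (show i < w₁.length by omega)).symm)
        (fun i hi => by
          simp only [Nat.zero_add]
          exact CEMain.Hchunk a n hones hzeros hi)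
        (hrfn (0 + n) (by omega))
      simpa using this
    have hW2 : riffle w₂ us = W' := by
      have := CEAux.riffle_flat (fun t => !(a t)) (CEMain.chunkF' a n k) (CEMain.leftf a n k)
        (CEMain.rightf a n k) n 0 w₂ (by rw [hcompl]; simp [h₁])
        (fun i hi => by
          rw [hcompl, List.getElem?_map,
            List.getElem?_eq_getElem (show i < w₁.length by omega)]
          simp only [Option.map_some, Nat.zero_add]
          congr 2
          rw [ha]
          exact (List.getD_eq_getElem w₁ false (show i < w₁.length by omega)).symm)
        (fun i hi => by
          simp only [Nat.zero_add]
          exact CEMain.Hchunk' a n hones hzeros hi)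
        (hrfn (0 + n) (by omega))
      simpa using this
    have hWlen : W.length = n * k :=
      CEAux.flatMap_ofFn_length (fun s (r : Fin k) => CEMain.Cf a n r s) n 0
    have hW'len : W'.length = n * k :=
      CEAux.flatMap_ofFn_length
        (fun s (r : Fin k) =>
          if (r : ℕ) = CEMain.idx a n s then !(a s) else CEMain.Cf a n r s) n 0
    have main1 : ∀ m, m < n * k → W'[m]? = W[(m + k) % (n * k)]? := by
      intro m hm
      have hmod_lt : (m + k) % (n * k) < n * k := Nat.mod_lt _ hNpos
      have e1 : W'[m]? = some (if (m % k) = CEMain.idx a n (0 + m / k)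
          then !(a (0 + m / k)) else CEMain.Cf a n (m % k) (0 + m / k)) :=
        CEAux.flatMap_ofFn_getElem? hkpos
          (fun s (r : Fin k) =>
            if (r : ℕ) = CEMain.idx a n s then !(a s) else CEMain.Cf a n r s) n 0 m hm
      have e2 : W[(m + k) % (n * k)]?
          = some (CEMain.Cf a n (((m + k) % (n * k)) % k) (0 + ((m + k) % (n * k)) / k)) :=
        CEAux.flatMap_ofFn_getElem? hkpos
          (fun s (r : Fin k) => CEMain.Cf a n r s) n 0 _ hmod_lt
      rw [e1, e2]
      simp only [Nat.zero_add]
      have htlt : m / k < n := (Nat.div_lt_iff_lt_mul hkpos).mpr (by omega)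
      have hrlt : m % k < k := Nat.mod_lt _ hkpos
      have hcore := CEMain.core a n hones hzeros hrlt htlt
      rw [hcore]
      congr 1
      by_cases hcase : m + k < n * k
      · have hA : (m + k) % (n * k) = m + k := Nat.mod_eq_of_lt hcase
        have hB : (m + k) / k = m / k + 1 := Nat.add_div_right m hkpos
        have hC : (m + k) % k = m % k := Nat.add_mod_right m k
        have hD : m / k + 1 < n := by
          have := (Nat.div_lt_iff_lt_mul hkpos).mpr (show m + k < n * k by omega)
          omega
        have hE : (m / k + 1) % n = m / k + 1 := Nat.mod_eq_of_lt hD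
        rw [hA, hB, hC, hE]
      · have hklen : k ≤ n * k := Nat.le_mul_of_pos_left k hnpos
        have hA : (m + k) % (n * k) = m + k - n * k := by
          rw [Nat.mod_eq_sub_mod (by omega)]
          exact Nat.mod_eq_of_lt (by omega)
        have hsub : (n - 1) * k = n * k - k := by
          rw [Nat.sub_mul, one_mul]
        have hdiv : m / k = n - 1 := by
          apply Nat.div_eq_of_lt_le
          · omega
          · have : (n - 1 + 1) * k = n * k := by congr 1; omega
            omega
        have hmodk : m % k = m + k - n * k := by
          have hmd := Nat.mod_add_div m k
          have hkn : k * (m / k) = n * k - k := by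
            rw [hdiv, Nat.mul_sub, Nat.mul_one, Nat.mul_comm]
          omega
        have hm'lt : m + k - n * k < k := by omega
        have h5 : (m + k - n * k) % k = m + k - n * k := Nat.mod_eq_of_lt hm'lt
        have h6 : (m + k - n * k) / k = 0 := Nat.div_eq_of_lt hm'lt
        have h7 : (m / k + 1) % n = 0 := by
          rw [hdiv]
          have : n - 1 + 1 = n := by omega
          rw [this, Nat.mod_self]
        rw [hA, h5, h6, h7, hmodk]
    have ce12 : CyclicallyEqual W W' := by
      refine ⟨by rw [hWlen, hW'len], (k : ℤ), fun j hj => ?_⟩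
      rw [hW'len] at hj
      have hcast : (((j : ℤ) + (k : ℤ)) % ((W.length : ℕ) : ℤ)).toNat = (j + k) % (n * k) := by
        rw [hWlen, ← Nat.cast_add, ← Int.natCast_mod, Int.toNat_natCast]
      rw [hcast]
      exact main1 j hj
    have ce21 : CyclicallyEqual W' W := by
      refine ⟨by rw [hWlen, hW'len], ((n * k - k : ℕ) : ℤ), fun j hj => ?_⟩
      rw [hWlen] at hj
      have hcast : (((j : ℤ) + ((n * k - k : ℕ) : ℤ)) % ((W'.length : ℕ) : ℤ)).toNat
          = (j + (n * k - k)) % (n * k) := by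
        rw [hW'len, ← Nat.cast_add, ← Int.natCast_mod, Int.toNat_natCast]
      rw [hcast]
      have hm := main1 ((j + (n * k - k)) % (n * k)) (Nat.mod_lt _ hNpos)
      have hklen : k ≤ n * k := Nat.le_mul_of_pos_left k hnpos
      have harith : (((j + (n * k - k)) % (n * k)) + k) % (n * k) = j := by
        rw [Nat.mod_add_mod]
        have h8 : j + (n * k - k) + k = j + n * k := by omega
        rw [h8, Nat.add_mod_right]
        exact Nat.mod_eq_of_lt hj
      rw [harith] at hm
      exact hm.symm
    refine ⟨![W, W'], ⟨us, fun u hu c hc => trivial, ?_, ?_⟩, ?_⟩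
    · intro i
      have huslen : us.length = n + 1 := by
        rw [husdef, List.length_cons, List.length_map, List.length_range']
      fin_cases i
      · simp [huslen, h₁]
      · simp [huslen, hcompl, h₁]
    · intro i
      fin_cases i
      · simpa using hW.symm
      · simpa using hW2.symm
    · intro i j
      fin_cases i <;> fin_cases j <;>
        simp only [Matrix.cons_val_zero, Matrix.cons_val_one, Matrix.head_cons,
          Fin.mk_zero, Fin.mk_one]
      · exact CEAux.cyclicallyEqual_refl W
      · exact ce12
      · exact ce21
      · exact CEAux.cyclicallyEqual_refl W'
end

section
/- The three binary words 1001, 1010, and 1100 are not 0-cyclically equalizable; that is, there is no simultaneous insertion of 0's at common positions into the three words that makes the resulting three words pairwise cyclically equal. -/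
/-- A binary word with exactly two `true`s: `s` falses, a `true`, `g` falses,
a `true`, `t` falses. -/
def twoOneWord (s g t : ℕ) : List Bool :=
  List.replicate s false ++ true :: (List.replicate g false ++ true :: List.replicate t false)

lemma getElem?_replicate_append_cons (n : ℕ) (l : List Bool) (j : ℕ) :
    (List.replicate n false ++ true :: l)[j]? = some true ↔
      j = n ∨ (n < j ∧ l[j - (n + 1)]? = some true) := by
  induction n generalizing j with
  | zero => cases j <;> simp
  | succ n ih =>
    cases j with
    | zero => simp [List.replicate_succ]
    | succ j =>
      simp only [List.replicate_succ, List.cons_append, List.getElem?_cons_succ]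
      rw [ih j]
      have h : j + 1 - (n + 1 + 1) = j - (n + 1) := by omega
      rw [h]
      constructor
      · rintro (h | ⟨h1, h2⟩)
        · left; omega
        · right; exact ⟨by omega, h2⟩
      · rintro (h | ⟨h1, h2⟩)
        · left; omega
        · right; exact ⟨by omega, h2⟩

lemma twoOneWord_getElem? (s g t j : ℕ) :
    (twoOneWord s g t)[j]? = some true ↔ j = s ∨ j = s + g + 1 := by
  rw [twoOneWord, getElem?_replicate_append_cons, getElem?_replicate_append_cons]
  simp only [List.getElem?_replicate]
  constructor
  · rintro (h | ⟨h1, (h2 | ⟨h3, h4⟩)⟩)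
    · left; exact h
    · right; omega
    · split at h4 <;> simp_all
  · rintro (h | h)
    · left; exact h
    · right; exact ⟨by omega, Or.inl (by omega)⟩

lemma twoOneWord_length (s g t : ℕ) : (twoOneWord s g t).length = s + g + t + 2 := by
  simp [twoOneWord]; omega

lemma int_dvd_small2 {m c : ℤ} (hm : 0 < m) (h : m ∣ c) (h1 : -(2 * m) < c) (h2 : c < m) :
    c = 0 ∨ c = -m := by
  rcases h with ⟨k, rfl⟩
  have hk1 : -2 < k := by nlinarith
  have hk2 : k < 1 := by nlinarith
  interval_cases k
  · right; ring
  · left; ring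

/-- If two words with exactly two `true`s each (and the same initial run of falses)
are cyclically equal, then the gaps agree or are complementary. -/
lemma gap_of_cyclicallyEqual (s g t g' t' : ℕ)
    (hE : CyclicallyEqual (twoOneWord s g t) (twoOneWord s g' t')) :
    g' = g ∨ g + g' + 2 = s + g + t + 2 := by
  obtain ⟨hl, δ, hδ⟩ := hE
  rw [twoOneWord_length, twoOneWord_length] at hl
  have h1 := hδ s (by rw [twoOneWord_length]; omega)
  have h2 := hδ (s + g' + 1) (by rw [twoOneWord_length]; omega)
  rw [twoOneWord_length] at h1 h2
  have e1 : (twoOneWord s g' t')[s]? = some true :=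
    (twoOneWord_getElem? _ _ _ _).2 (Or.inl rfl)
  have e2 : (twoOneWord s g' t')[s + g' + 1]? = some true :=
    (twoOneWord_getElem? _ _ _ _).2 (Or.inr rfl)
  set M : ℤ := ((s + g + t + 2 : ℕ) : ℤ) with hM
  have hM0 : 0 < M := by positivity
  set a : ℤ := ((s : ℤ) + δ) % M with hadef
  set b : ℤ := (((s + g' + 1 : ℕ) : ℤ) + δ) % M with hbdef
  have ha : a.toNat = s ∨ a.toNat = s + g + 1 :=
    (twoOneWord_getElem? _ _ _ _).1 (h1.symm.trans e1)
  have hb : b.toNat = s ∨ b.toNat = s + g + 1 :=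
    (twoOneWord_getElem? _ _ _ _).1 (h2.symm.trans e2)
  have ha0 : 0 ≤ a := Int.emod_nonneg _ (ne_of_gt hM0)
  have hb0 : 0 ≤ b := Int.emod_nonneg _ (ne_of_gt hM0)
  have haM : a < M := Int.emod_lt_of_pos _ hM0
  have hbM : b < M := Int.emod_lt_of_pos _ hM0
  have hdvd : M ∣ b - a - ((g' : ℤ) + 1) := by
    have h3 : (b - a) % M = ((((s + g' + 1 : ℕ) : ℤ) + δ) - ((s : ℤ) + δ)) % M := by
      rw [hadef, hbdef, Int.sub_emod, Int.emod_emod_of_dvd _ dvd_rfl,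
        Int.emod_emod_of_dvd _ dvd_rfl, ← Int.sub_emod]
    have h4 : (b - a) % M = ((g' : ℤ) + 1) % M := by
      rw [h3]; congr 1; push_cast; ring
    exact Int.dvd_of_emod_eq_zero (Int.emod_eq_emod_iff_emod_sub_eq_zero.1 h4)
  have hc := int_dvd_small2 hM0 hdvd (by omega) (by omega)
  omega

lemma replicate_merge (a b : ℕ) (l : List Bool) :
    List.replicate a false ++ false :: (List.replicate b false ++ l)
      = List.replicate (a + b + 1) false ++ l := by
  rw [show a + b + 1 = a + (b + 1) by ring, List.replicate_add, List.replicate_succ,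
    List.append_assoc, List.cons_append]

lemma replicate_merge' (a b : ℕ) :
    List.replicate a false ++ false :: List.replicate b false
      = List.replicate (a + b + 1) (false : Bool) := by
  have := replicate_merge a b ([] : List Bool)
  simpa using this

/-- The three binary words `1001`, `1010`, and `1100` are not `0`-cyclically
equalizable. -/
theorem not_zero_cyclically_equalizable_1001_1010_1100 :
    ¬ CyclicallyEqualizable ({false} : Set Bool)
      ![[true, false, false, true],
        [true, false, true, false],
        [true, true, false, false]] := by
  rintro ⟨w', ⟨us, hΔ, hlen, hr⟩, hcyc⟩
  have h5 : us.length = 5 := by simpa using hlen 0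
  obtain ⟨u0, u1, u2, u3, u4, rfl⟩ : ∃ a b c d e, us = [a, b, c, d, e] := by
    rcases us with _ | ⟨u0, _ | ⟨u1, _ | ⟨u2, _ | ⟨u3, _ | ⟨u4, _ | ⟨u5, tl⟩⟩⟩⟩⟩⟩ <;>
      simp_all
  have hrep : ∀ u ∈ [u0, u1, u2, u3, u4], u = List.replicate u.length false := by
    intro u hu
    exact List.eq_replicate_of_mem (fun b hb => by simpa using hΔ u hu b hb)
  set x0 := u0.length; set x1 := u1.length; set x2 := u2.length
  set x3 := u3.length; set x4 := u4.length
  have hu0 : u0 = List.replicate x0 false := hrep u0 (by simp)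
  have hu1 : u1 = List.replicate x1 false := hrep u1 (by simp)
  have hu2 : u2 = List.replicate x2 false := hrep u2 (by simp)
  have hu3 : u3 = List.replicate x3 false := hrep u3 (by simp)
  have hu4 : u4 = List.replicate x4 false := hrep u4 (by simp)
  have hw0 : w' 0 = twoOneWord x0 (x1 + x2 + x3 + 2) x4 := by
    have h : w' 0 = riffle [true, false, false, true] [u0, u1, u2, u3, u4] := hr 0
    rw [h, hu0, hu1, hu2, hu3, hu4]
    simp only [riffle, List.headD_cons, List.tail_cons, List.flatten,
      List.append_nil, List.append_eq, twoOneWord]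
    rw [replicate_merge, replicate_merge,
      show x1 + x2 + 1 + x3 + 1 = x1 + x2 + x3 + 2 from by ring]
  have hw1 : w' 1 = twoOneWord x0 (x1 + x2 + 1) (x3 + x4 + 1) := by
    have h : w' 1 = riffle [true, false, true, false] [u0, u1, u2, u3, u4] := hr 1
    rw [h, hu0, hu1, hu2, hu3, hu4]
    simp only [riffle, List.headD_cons, List.tail_cons, List.flatten,
      List.append_nil, List.append_eq, twoOneWord]
    rw [replicate_merge, replicate_merge']
  have hw2 : w' 2 = twoOneWord x0 x1 (x2 + x3 + x4 + 2) := by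
    have h : w' 2 = riffle [true, true, false, false] [u0, u1, u2, u3, u4] := hr 2
    rw [h, hu0, hu1, hu2, hu3, hu4]
    simp only [riffle, List.headD_cons, List.tail_cons, List.flatten,
      List.append_nil, List.append_eq, twoOneWord]
    rw [replicate_merge, replicate_merge',
      show x2 + x3 + 1 + x4 + 1 = x2 + x3 + x4 + 2 from by ring]
  have c01 := hcyc 0 1
  have c02 := hcyc 0 2
  rw [hw0, hw1] at c01
  rw [hw0, hw2] at c02
  have k1 := gap_of_cyclicallyEqual _ _ _ _ _ c01
  have k2 := gap_of_cyclicallyEqual _ _ _ _ _ c02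
  omega
end
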